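/- With φ₇ = arctan(√7), Cl₂(π + 2φ₇) = (1/2)Cl₂(4φ₇) - Cl₂(2φ₇). -/

import Mathlib

open Real

noncomputable def Cl2 (θ : ℝ) : ℝ := ∑' m : ℕ, Real.sin ((m + 1) * θ) / (m + 1) ^ 2

/-!
Since `sin (n * (π + θ)) = (-1) ^ n * sin (n * θ)`, the series `Cl2 (π + θ)` is the alternating
version of `Cl2 θ`, i.e. twice its even part minus itself, and the even part is `Cl2 (2 * θ) / 4`.
Hence `Cl2 (π + θ) = Cl2 (2 * θ) / 2 - Cl2 θ` for every `θ`; take `θ = 2 * arctan √7`.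
-/

theorem tsum_neg_one_pow_mul {α : Type*} [Ring α] [UniformSpace α] [IsUniformAddGroup α]
    [CompleteSpace α] [T2Space α] {f : ℕ → α} (hf : Summable f) :
    ∑' n, (-1) ^ n * f n = 2 * ∑' k, f (2 * k) - ∑' n, f n := by
  have he : Summable fun k ↦ f (2 * k) :=
    hf.comp_injective (mul_right_injective₀ (two_ne_zero' ℕ))
  have ho : Summable fun k ↦ f (2 * k + 1) :=
    hf.comp_injective ((add_left_injective 1).comp (mul_right_injective₀ (two_ne_zero' ℕ)))
  have h_alt : ∑' n, (-1) ^ n * f n = ∑' k, f (2 * k) - ∑' k, f (2 * k + 1) := by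
    have he' : Summable fun k ↦ (-1 : α) ^ (2 * k) * f (2 * k) := by
      simpa only [pow_mul, neg_one_sq, one_pow, one_mul] using he
    have ho' : Summable fun k ↦ (-1 : α) ^ (2 * k + 1) * f (2 * k + 1) := by
      simpa only [pow_add, pow_mul, neg_one_sq, one_pow, pow_one, one_mul, neg_one_mul] using ho.neg
    have h := tsum_even_add_odd (f := fun n ↦ (-1 : α) ^ n * f n) he' ho'
    simp only [pow_add, pow_mul, neg_one_sq, one_pow, pow_one, one_mul, neg_one_mul,
      tsum_neg] at h
    rw [← h, sub_eq_add_neg]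
  rw [h_alt, ← tsum_even_add_odd he ho, two_mul]
  abel

theorem summable_sin_nat_mul_div_sq (θ : ℝ) :
    Summable fun n : ℕ ↦ sin (n * θ) / (n : ℝ) ^ 2 := by
  refine (summable_one_div_nat_pow.mpr one_lt_two).of_norm_bounded fun n ↦ ?_
  rw [norm_div, norm_pow, Real.norm_natCast, Real.norm_eq_abs]
  exact div_le_div_of_nonneg_right (abs_sin_le_one _) (by positivity)

theorem Cl2_eq_tsum (θ : ℝ) : Cl2 θ = ∑' n : ℕ, sin (n * θ) / (n : ℝ) ^ 2 := by
  rw [(summable_sin_nat_mul_div_sq θ).tsum_eq_zero_add, Cl2]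
  simp

theorem Cl2_pi_add (θ : ℝ) : Cl2 (π + θ) = 1 / 2 * Cl2 (2 * θ) - Cl2 θ := by
  have h_even :
      ∑' k : ℕ, sin (↑(2 * k) * θ) / (↑(2 * k) : ℝ) ^ 2 = 1 / 4 * Cl2 (2 * θ) := by
    rw [Cl2_eq_tsum, ← tsum_mul_left]
    refine tsum_congr fun k ↦ ?_
    rw [show (↑(2 * k) : ℝ) * θ = k * (2 * θ) by push_cast; ring]
    push_cast
    ring
  calc Cl2 (π + θ) = ∑' n : ℕ, (-1) ^ n * (sin (n * θ) / (n : ℝ) ^ 2) := by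
        rw [Cl2_eq_tsum]
        refine tsum_congr fun n ↦ ?_
        rw [mul_add, add_comm, sin_add_nat_mul_pi, mul_div_assoc]
    _ = 1 / 2 * Cl2 (2 * θ) - Cl2 θ := by
        rw [tsum_neg_one_pow_mul (summable_sin_nat_mul_div_sq θ), h_even, Cl2_eq_tsum θ]
        ring

theorem stmt15 :
    Cl2 (π + 2 * Real.arctan (Real.sqrt 7)) =
      (1 / 2) * Cl2 (4 * Real.arctan (Real.sqrt 7))
        - Cl2 (2 * Real.arctan (Real.sqrt 7)) := by
  rw [Cl2_pi_add, show 2 * (2 * arctan √7) = 4 * arctan √7 by ring]
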